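/- An ordered tree T ∈ 𝕋_n (rooted tree with n leaves, every internal node having ≥ 2 children) is the maximum element of 𝕋_n under the tree order if and only if T contains no pivot node, i.e., every node of T is exhausted (is a leaf or its induced partition is the maximum partition (⌊l(v)/2⌋, ⌈l(v)/2⌉) of l(v)). -/

import Mathlib

/-- Rooted trees: a node with a (possibly empty) list of children.
A leaf is a node with no children. -/
inductive RTree where
  | node : List RTree → RTree
deriving Repr

mutual
/-- Number of leaves of the subtree rooted at a node (`l(v)` in the paper). -/
def RTree.leafCount : RTree → ℕ
  | .node [] => 1
  | .node (t :: ts) => t.leafCount + RTree.leafCountList ts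

def RTree.leafCountList : List RTree → ℕ
  | [] => 0
  | t :: ts => t.leafCount + RTree.leafCountList ts
end

mutual
/-- Total number of nodes of a rooted tree. -/
def RTree.nodeCount : RTree → ℕ
  | .node ts => 1 + RTree.nodeCountList ts

def RTree.nodeCountList : List RTree → ℕ
  | [] => 0
  | t :: ts => t.nodeCount + RTree.nodeCountList ts
end

mutual
/-- Number of internal nodes (nodes with at least one child). -/
def RTree.internalCount : RTree → ℕ
  | .node [] => 0
  | .node (t :: ts) => 1 + t.internalCount + RTree.internalCountList ts

def RTree.internalCountList : List RTree → ℕ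
  | [] => 0
  | t :: ts => t.internalCount + RTree.internalCountList ts
end

mutual
/-- Member of 𝕋: every internal node has at least two children. -/
def RTree.WF : RTree → Prop
  | .node ts => ts.length ≠ 1 ∧ RTree.WFList ts

def RTree.WFList : List RTree → Prop
  | [] => True
  | t :: ts => t.WF ∧ RTree.WFList ts
end

/-- `Subtree s t`: `s` is the subtree rooted at some node of `t`. -/
inductive RTree.Subtree : RTree → RTree → Prop
  | refl (t : RTree) : RTree.Subtree t t
  | child {s c : RTree} {ts : List RTree} :
      c ∈ ts → RTree.Subtree s c → RTree.Subtree s (.node ts)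

/-- The partition induced by a node: the non-decreasing sequence of
leaf-counts of its children. -/
def inducedPartition (ts : List RTree) : List ℕ :=
  (ts.map RTree.leafCount).mergeSort (· ≤ ·)

/-- Generic lexicographic comparison of lists. -/
def lexCmp (c : α → α → Ordering) : List α → List α → Ordering
  | [], [] => .eq
  | [], _ :: _ => .lt
  | _ :: _, [] => .gt
  | a :: l, b :: m => (c a b).then (lexCmp c l m)

/-- Fuel-driven comparison of nodes, following Definition 3.1 of the paper:
compare leaf counts first, then induced partitions lexicographically, then
the lists of children, sorted w.r.t. this very order, lexicographically. -/
def nodeCmpF : ℕ → RTree → RTree → Ordering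
  | 0, _, _ => .eq
  | fuel + 1, .node ts, .node us =>
    (compare (RTree.node ts).leafCount (RTree.node us).leafCount).then <|
      (lexCmp compare (inducedPartition ts) (inducedPartition us)).then <|
        lexCmp (nodeCmpF fuel)
          (ts.mergeSort (fun a b => nodeCmpF fuel a b ≠ .gt))
          (us.mergeSort (fun a b => nodeCmpF fuel a b ≠ .gt))

/-- The recursive order of Definition 3.1 (a fuel of `sizeOf` is always
sufficient, since each recursive step strictly decreases the depth). -/
def nodeCmp (s t : RTree) : Ordering := nodeCmpF (s.nodeCount + t.nodeCount) s t

/-- `v < w` in the recursive node order. -/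
def NodeLT (v w : RTree) : Prop := nodeCmp v w = .lt

/-- `v ∼ w` (equivalence) in the recursive node order. -/
def NodeEquiv (v w : RTree) : Prop := nodeCmp v w = .eq

/-- Isomorphism of rooted trees: equality up to permutation of siblings. -/
inductive TreeIso : RTree → RTree → Prop
  | node {ts us us' : List RTree} :
      us.Perm us' → List.Forall₂ TreeIso ts us' → TreeIso (.node ts) (.node us)

mutual
/-- A tree is ordered if every siblinghood is sorted non-decreasingly
w.r.t. the recursive node order. -/
def RTree.Ordered : RTree → Prop
  | .node ts => ts.Chain' (fun a b => nodeCmp a b ≠ .gt) ∧ RTree.OrderedList ts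

def RTree.OrderedList : List RTree → Prop
  | [] => True
  | t :: ts => t.Ordered ∧ RTree.OrderedList ts
end

/-- A node is exhausted if it is a leaf or its induced partition is the
maximum element (⌊l/2⌋, ⌈l/2⌉) of Part(l). -/
def RTree.Exhausted : RTree → Prop
  | .node ts => ts = [] ∨
      inducedPartition ts =
        [(RTree.node ts).leafCount / 2, ((RTree.node ts).leafCount + 1) / 2]

/-! ### Auxiliary development -/

section Aux

lemma leafCount_pos : (t : RTree) → 1 ≤ t.leafCount
  | .node [] => le_refl 1
  | .node (t :: ts) => by
      have := leafCount_pos t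
      simp only [RTree.leafCount]; omega

lemma leafCountList_eq : ∀ ts : List RTree,
    RTree.leafCountList ts = (ts.map RTree.leafCount).sum := by
  intro ts; induction ts with
  | nil => rfl
  | cons t ts ih => simp [RTree.leafCountList, ih]

lemma leafCount_cons (t : RTree) (ts : List RTree) :
    (RTree.node (t :: ts)).leafCount = ((t :: ts).map RTree.leafCount).sum := by
  simp [RTree.leafCount, leafCountList_eq]

lemma nodeCount_pos : (t : RTree) → 1 ≤ t.nodeCount
  | .node ts => by simp only [RTree.nodeCount]; omega

lemma nodeCountList_mem {t : RTree} : ∀ {ts : List RTree}, t ∈ ts →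
    t.nodeCount ≤ RTree.nodeCountList ts := by
  intro ts; induction ts with
  | nil => intro h; cases h
  | cons s ts ih =>
      intro h
      rcases List.mem_cons.mp h with h | h
      · subst h; simp only [RTree.nodeCountList]; omega
      · have := ih h; simp only [RTree.nodeCountList]; omega

lemma WFList_mem {t : RTree} : ∀ {ts : List RTree}, RTree.WFList ts → t ∈ ts → t.WF := by
  intro ts; induction ts with
  | nil => intro _ h; cases h
  | cons s ts ih =>
      intro hwf h
      rcases List.mem_cons.mp h with h | h
      · subst h; exact hwf.1
      · exact ih hwf.2 h

lemma subtree_node {S : RTree} {ts : List RTree} (h : S.Subtree (.node ts)) :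
    S = .node ts ∨ ∃ c ∈ ts, S.Subtree c := by
  cases h with
  | refl => exact Or.inl rfl
  | child hm hs => exact Or.inr ⟨_, hm, hs⟩

/-- All nodes exhausted. -/
def AllEx (t : RTree) : Prop := ∀ S : RTree, S.Subtree t → S.Exhausted

lemma allEx_child {ts : List RTree} (h : AllEx (.node ts)) {c : RTree} (hc : c ∈ ts) :
    AllEx c := fun S hs => h S (.child hc hs)

lemma allEx_leaf : AllEx (.node []) := by
  intro S hs
  rcases subtree_node hs with h | ⟨c, hc, _⟩
  · subst h; exact Or.inl rfl
  · cases hc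

/-! Ordering helpers -/

lemma eq_then (x : Ordering) : Ordering.eq.then x = x := rfl
lemma lt_then (x : Ordering) : Ordering.lt.then x = .lt := rfl
lemma gt_then (x : Ordering) : Ordering.gt.then x = .gt := rfl

lemma then_swap (a b : Ordering) : (a.then b).swap = a.swap.then b.swap := by
  cases a <;> rfl

lemma natCompare_swap (a b : ℕ) : compare a b = (compare b a).swap := by
  rcases lt_trichotomy a b with h|h|h
  · simp [Nat.compare_eq_lt.mpr h, Nat.compare_eq_gt.mpr h, Ordering.swap]
  · subst h; simp [Nat.compare_eq_eq.mpr rfl, Ordering.swap]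
  · simp [Nat.compare_eq_gt.mpr h, Nat.compare_eq_lt.mpr h, Ordering.swap]

lemma natCompare_self (a : ℕ) : compare a a = .eq := Nat.compare_eq_eq.mpr rfl

lemma lexCmp_nil {c : α → α → Ordering} : lexCmp c [] [] = .eq := rfl
lemma lexCmp_cons {c : α → α → Ordering} (a b : α) (l m : List α) :
    lexCmp c (a :: l) (b :: m) = (c a b).then (lexCmp c l m) := rfl

lemma lexCmp_swap {c c' : α → α → Ordering} (h : ∀ a b, c a b = (c' b a).swap) :
    ∀ l m, lexCmp c l m = (lexCmp c' m l).swap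
  | [], [] => rfl
  | [], _ :: _ => rfl
  | _ :: _, [] => rfl
  | a :: l, b :: m => by
      rw [lexCmp_cons, lexCmp_cons, h, lexCmp_swap h l m, ← then_swap]

lemma lexCmp_eq_of {c : α → α → Ordering} (h : ∀ a b, c a b = .eq) :
    ∀ l m, l.length = m.length → lexCmp c l m = .eq
  | [], [], _ => rfl
  | [], _ :: _, hl => by simp at hl
  | _ :: _, [], hl => by simp at hl
  | a :: l, b :: m, hl => by
      rw [lexCmp_cons, h, eq_then]
      exact lexCmp_eq_of h l m (by simpa using hl)

lemma mergeSort_pair (le : α → α → Bool) (a b : α) :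
    List.mergeSort [a, b] le = if le a b then [a, b] else [b, a] := by
  simp [List.mergeSort, List.merge]

lemma nodeCmpF_succ (g : ℕ) (ts us : List RTree) :
    nodeCmpF (g + 1) (.node ts) (.node us) =
      (compare (RTree.node ts).leafCount (RTree.node us).leafCount).then
        ((lexCmp compare (inducedPartition ts) (inducedPartition us)).then
          (lexCmp (nodeCmpF g)
            (ts.mergeSort (fun a b => nodeCmpF g a b ≠ .gt))
            (us.mergeSort (fun a b => nodeCmpF g a b ≠ .gt)))) := rfl

lemma nodeCmpF_swap : ∀ (f : ℕ) (s t : RTree), nodeCmpF f s t = (nodeCmpF f t s).swap := by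
  intro f
  induction f with
  | zero => intro s t; rfl
  | succ g ih =>
      intro s t
      obtain ⟨ts⟩ := s; obtain ⟨us⟩ := t
      rw [nodeCmpF_succ, nodeCmpF_succ, then_swap, then_swap,
        ← natCompare_swap, ← lexCmp_swap (fun a b => natCompare_swap a b),
        ← lexCmp_swap (fun a b => ih a b)]

lemma nodeCmpF_lt_of_lc_lt {g : ℕ} {s t : RTree} (h : s.leafCount < t.leafCount) :
    nodeCmpF (g + 1) s t = .lt := by
  obtain ⟨ts⟩ := s; obtain ⟨us⟩ := t
  rw [nodeCmpF_succ, Nat.compare_eq_lt.mpr h, lt_then]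

lemma nodeCmpF_gt_of_lc_gt {g : ℕ} {s t : RTree} (h : t.leafCount < s.leafCount) :
    nodeCmpF (g + 1) s t = .gt := by
  obtain ⟨ts⟩ := s; obtain ⟨us⟩ := t
  rw [nodeCmpF_succ, Nat.compare_eq_gt.mpr h, gt_then]

/-- Lexicographic maximality of the balanced partition. -/
lemma part_max (n : ℕ) (p : List ℕ) (hlen : 2 ≤ p.length)
    (hsort : List.Pairwise (· ≤ ·) p) (hpos : ∀ x ∈ p, 1 ≤ x) (hsum : p.sum = n) :
    lexCmp compare [n / 2, (n + 1) / 2] p = .gt ∨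
      (p = [n / 2, (n + 1) / 2] ∧ lexCmp compare [n / 2, (n + 1) / 2] p = .eq) := by
  match p with
  | a :: b :: rest =>
    have hab : a ≤ b := (List.pairwise_cons.mp hsort).1 b (by simp)
    have hsum' : a + b + rest.sum = n := by simpa [add_assoc] using hsum
    have ha : a ≤ n / 2 := by omega
    rcases eq_or_lt_of_le ha with ha' | ha'
    · have hb : b ≤ (n + 1) / 2 := by omega
      rcases eq_or_lt_of_le hb with hb' | hb'
      · have hrest : rest = [] := by
          cases rest with
          | nil => rfl
          | cons r rr =>
              have hr : 1 ≤ r := hpos r (by simp)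
              have : r + rr.sum = List.sum (r :: rr) := by simp
              omega
        subst hrest
        right
        constructor
        · simp [← ha', ← hb']
        · rw [lexCmp_cons, lexCmp_cons, ha', hb', natCompare_self, natCompare_self,
            eq_then, eq_then, lexCmp_nil]
      · left
        rw [lexCmp_cons, ha', natCompare_self, eq_then, lexCmp_cons,
          Nat.compare_eq_gt.mpr hb', gt_then]
    · left
      rw [lexCmp_cons, Nat.compare_eq_gt.mpr ha', gt_then]

lemma perm_pair {α : Type*} {p q x y : α} (h : [p, q].Perm [x, y]) :
    (p = x ∧ q = y) ∨ (p = y ∧ q = x) := by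
  have hp : p ∈ [x, y] := h.subset (by simp)
  rcases List.mem_pair.mp hp with hpx | hpy
  · subst hpx
    have := List.perm_singleton.mp (h.cons_inv)
    left; exact ⟨rfl, by simpa using this⟩
  · subst hpy
    have h2 : [p, q].Perm [p, x] := h.trans (List.Perm.swap p x [])
    have := List.perm_singleton.mp (h2.cons_inv)
    right; exact ⟨rfl, by simpa using this⟩

/-- Sorting a pair of trees with the fueled comparison puts the smaller
leaf count first. -/
lemma pairSort (g : ℕ) (a b : RTree) (x y : ℕ) (hxy : x ≤ y)
    (h : (a.leafCount = x ∧ b.leafCount = y) ∨ (a.leafCount = y ∧ b.leafCount = x)) :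
    ∃ c d, List.mergeSort [a, b] (fun p q => nodeCmpF (g + 1) p q ≠ .gt) = [c, d] ∧
      ((c = a ∧ d = b) ∨ (c = b ∧ d = a)) ∧ c.leafCount = x ∧ d.leafCount = y := by
  rw [mergeSort_pair]
  split
  case isTrue hle =>
    refine ⟨a, b, rfl, Or.inl ⟨rfl, rfl⟩, ?_⟩
    rcases h with ⟨h1, h2⟩ | ⟨h1, h2⟩
    · exact ⟨h1, h2⟩
    · rcases eq_or_lt_of_le hxy with hxy' | hxy'
      · exact ⟨by omega, by omega⟩
      · exfalso
        have : nodeCmpF (g + 1) a b = .gt := nodeCmpF_gt_of_lc_gt (by omega)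
        simp [this] at hle
  case isFalse hle =>
    refine ⟨b, a, rfl, Or.inr ⟨rfl, rfl⟩, ?_⟩
    rcases h with ⟨h1, h2⟩ | ⟨h1, h2⟩
    · rcases eq_or_lt_of_le hxy with hxy' | hxy'
      · exact ⟨by omega, by omega⟩
      · exfalso
        have : nodeCmpF (g + 1) a b = .lt := nodeCmpF_lt_of_lc_lt (by omega)
        simp [this] at hle
    · exact ⟨h2, h1⟩

lemma inducedPartition_perm (us : List RTree) :
    (inducedPartition us).Perm (us.map RTree.leafCount) :=
  List.mergeSort_perm _ _

lemma inducedPartition_facts (us : List RTree) :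
    List.Pairwise (· ≤ ·) (inducedPartition us) ∧
      (∀ x ∈ inducedPartition us, 1 ≤ x) ∧
      (inducedPartition us).sum = (us.map RTree.leafCount).sum ∧
      (inducedPartition us).length = us.length := by
  have hperm : (inducedPartition us).Perm (us.map RTree.leafCount) :=
    List.mergeSort_perm _ _
  refine ⟨?_, ?_, hperm.sum_eq, by simpa using hperm.length_eq⟩
  · have := List.pairwise_mergeSort (le := fun a b : ℕ => a ≤ b)
      (fun a b c hab hbc => by simp at *; omega)
      (fun a b => by simp [Nat.le_total]) (us.map RTree.leafCount)
    simpa [inducedPartition] using this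
  · intro x hx
    rcases List.mem_map.mp (hperm.subset hx) with ⟨t, _, ht⟩
    exact ht ▸ leafCount_pos t

/-- Main lemma: an all-exhausted tree is maximal (and strictly above any
tree with the same leaf count that is not all-exhausted, given enough fuel). -/
lemma main_lemma : ∀ (fuel : ℕ) (T t : RTree), T.WF → AllEx T → t.WF →
    t.leafCount = T.leafCount →
    nodeCmpF fuel T t ≠ .lt ∧
      (T.nodeCount + t.nodeCount ≤ fuel → ¬ AllEx t → nodeCmpF fuel T t = .gt) := by
  intro fuel
  induction fuel with
  | zero =>
      intro T t _ _ _ _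
      constructor
      · simp [nodeCmpF]
      · intro hb _
        have := nodeCount_pos T; have := nodeCount_pos t; omega
  | succ g IH =>
      intro T t hTwf hTex htwf hlc
      obtain ⟨ts⟩ := T; obtain ⟨us⟩ := t
      rw [nodeCmpF_succ, hlc, natCompare_self, eq_then]
      rcases ts with _ | ⟨t0, ts'⟩
      · -- T is a single leaf
        have h1 : (RTree.node us).leafCount = 1 := by
          simpa [RTree.leafCount] using hlc
        have hus : us = [] := by
          rcases us with _ | ⟨u0, us'⟩
          · rfl
          · rcases us' with _ | ⟨u1, us''⟩
            · exact absurd rfl htwf.1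
            · exfalso
              have h0 := leafCount_pos u0
              have h1' := leafCount_pos u1
              have he : (RTree.node (u0 :: u1 :: us'')).leafCount
                  = u0.leafCount + (u1.leafCount + RTree.leafCountList us'') := by
                simp [RTree.leafCount, RTree.leafCountList]
              omega
        subst hus
        constructor
        · simp only [inducedPartition, List.map_nil, List.mergeSort_nil,
            List.mergeSort, lexCmp]
          decide
        · intro _ hna; exact absurd allEx_leaf hna
      · -- T has children
        set n := (RTree.node (t0 :: ts')).leafCount with hn
        have hroot := hTex _ (.refl _)
        rcases hroot with hnil | hpart
        · simp at hnil
        -- hpart : inducedPartition (t0 :: ts') = [n/2, (n+1)/2]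
        have hpermT : ((t0 :: ts').map RTree.leafCount).Perm [n / 2, (n + 1) / 2] := by
          have h := inducedPartition_perm (t0 :: ts')
          rw [hpart] at h
          exact h.symm
        have hn2 : 2 ≤ n := by
          have hmem : n / 2 ∈ (t0 :: ts').map RTree.leafCount :=
            hpermT.symm.subset (by simp)
          rcases List.mem_map.mp hmem with ⟨c, _, hc⟩
          have := leafCount_pos c
          omega
        -- ts has exactly two elements
        have hlenT : (t0 :: ts').length = 2 := by
          simpa using hpermT.length_eq
        rcases ts' with _ | ⟨t1, ts''⟩
        · simp at hlenT
        have hts0 : ts''.length = 0 := by simpa using hlenT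
        obtain rfl := List.length_eq_zero_iff.mp hts0
        have hcase_ts : (t0.leafCount = n / 2 ∧ t1.leafCount = (n + 1) / 2) ∨
            (t0.leafCount = (n + 1) / 2 ∧ t1.leafCount = n / 2) := by
          have := perm_pair (by simpa using hpermT)
          exact this
        -- t has at least two children
        have hn' : (RTree.node us).leafCount = n := hlc
        rcases us with _ | ⟨u0, us'⟩
        · exfalso
          have : (RTree.node ([] : List RTree)).leafCount = 1 := rfl
          omega
        rcases us' with _ | ⟨u1, us''⟩
        · exact absurd rfl htwf.1
        -- partition comparison
        obtain ⟨hsortP, hposP, hsumP, hlenP⟩ := inducedPartition_facts (u0 :: u1 :: us'')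
        have hsumP' : (inducedPartition (u0 :: u1 :: us'')).sum = n := by
          rw [hsumP, ← leafCount_cons]; exact hn'
        have hlenP' : 2 ≤ (inducedPartition (u0 :: u1 :: us'')).length := by
          rw [hlenP]; simp
        rcases part_max n _ hlenP' hsortP hposP hsumP' with hgt | ⟨hpeq, heq⟩
        · rw [hpart, hgt, gt_then]
          exact ⟨by decide, fun _ _ => rfl⟩
        · rw [hpart, heq, eq_then]
          -- t also has exactly two children with balanced leaf counts
          have hlenU : us'' = [] := by
            have := hlenP
            rw [hpeq] at this
            simpa using this.symm
          subst hlenU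
          have hpermU : ([u0, u1].map RTree.leafCount).Perm [n / 2, (n + 1) / 2] := by
            have h := inducedPartition_perm [u0, u1]
            rw [hpeq] at h
            exact h.symm
          have hcase_us : (u0.leafCount = n / 2 ∧ u1.leafCount = (n + 1) / 2) ∨
              (u0.leafCount = (n + 1) / 2 ∧ u1.leafCount = n / 2) := by
            have := perm_pair (by simpa using hpermU)
            exact this
          rcases g with _ | g'
          · -- inner fuel 0: everything compares equal
            constructor
            · have hlen2 : (List.mergeSort [t0, t1]
                  (fun a b => nodeCmpF 0 a b ≠ .gt)).length =
                  (List.mergeSort [u0, u1]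
                  (fun a b => nodeCmpF 0 a b ≠ .gt)).length := by
                have h1 := (List.mergeSort_perm [t0, t1]
                  (fun a b => decide (nodeCmpF 0 a b ≠ .gt))).length_eq
                have h2 := (List.mergeSort_perm [u0, u1]
                  (fun a b => decide (nodeCmpF 0 a b ≠ .gt))).length_eq
                simp at h1 h2
                simp [h1, h2]
              rw [lexCmp_eq_of (c := nodeCmpF 0) (fun a b => rfl) _ _ hlen2]
              decide
            · intro hb _
              exfalso
              have e1 : (RTree.node [t0, t1]).nodeCount
                  = 1 + (t0.nodeCount + (t1.nodeCount + 0)) := rfl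
              have e2 : (RTree.node [u0, u1]).nodeCount
                  = 1 + (u0.nodeCount + (u1.nodeCount + 0)) := rfl
              have := nodeCount_pos t0; have := nodeCount_pos t1
              have := nodeCount_pos u0; have := nodeCount_pos u1
              omega
          · -- inner fuel g' + 1
            obtain ⟨c1, c2, hsortT, hcT, hlcc1, hlcc2⟩ :=
              pairSort g' t0 t1 (n / 2) ((n + 1) / 2) (by omega) hcase_ts
            obtain ⟨d1, d2, hsortU, hcU, hlcd1, hlcd2⟩ :=
              pairSort g' u0 u1 (n / 2) ((n + 1) / 2) (by omega) hcase_us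
            rw [hsortT, hsortU, lexCmp_cons, lexCmp_cons, lexCmp_nil]
            have hc1m : c1 ∈ [t0, t1] := by
              rcases hcT with ⟨h1, _⟩ | ⟨h1, _⟩ <;> simp [h1]
            have hc2m : c2 ∈ [t0, t1] := by
              rcases hcT with ⟨_, h2⟩ | ⟨_, h2⟩ <;> simp [h2]
            have hwfc1 : c1.WF := WFList_mem hTwf.2 hc1m
            have hwfc2 : c2.WF := WFList_mem hTwf.2 hc2m
            have hexc1 : AllEx c1 := allEx_child hTex hc1m
            have hexc2 : AllEx c2 := allEx_child hTex hc2m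
            have hd1m : d1 ∈ [u0, u1] := by
              rcases hcU with ⟨h1, _⟩ | ⟨h1, _⟩ <;> simp [h1]
            have hd2m : d2 ∈ [u0, u1] := by
              rcases hcU with ⟨_, h2⟩ | ⟨_, h2⟩ <;> simp [h2]
            have hwfd1 : d1.WF := WFList_mem htwf.2 hd1m
            have hwfd2 : d2.WF := WFList_mem htwf.2 hd2m
            have IH1 := IH c1 d1 hwfc1 hexc1 hwfd1 (by rw [hlcd1, hlcc1])
            have IH2 := IH c2 d2 hwfc2 hexc2 hwfd2 (by rw [hlcd2, hlcc2])
            constructor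
            · cases hK1 : nodeCmpF (g' + 1) c1 d1 with
              | lt => exact absurd hK1 IH1.1
              | gt => rw [gt_then]; decide
              | eq =>
                  rw [eq_then]
                  cases hK2 : nodeCmpF (g' + 1) c2 d2 with
                  | lt => exact absurd hK2 IH2.1
                  | gt => rw [gt_then]; decide
                  | eq => rw [eq_then]; decide
            · intro hb hna
              -- find where the defect is
              have hrootEx : (RTree.node [u0, u1]).Exhausted := by
                right
                rw [hn']
                exact hpeq
              have hdef : ¬ AllEx d1 ∨ ¬ AllEx d2 := by
                by_contra hcon
                push_neg at hcon
                apply hna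
                intro S hs
                rcases subtree_node hs with h | ⟨u, hu, hsu⟩
                · rw [h]; exact hrootEx
                · have hud : u = d1 ∨ u = d2 := by
                    rcases List.mem_pair.mp hu with h | h <;>
                      rcases hcU with ⟨h1, h2⟩ | ⟨h1, h2⟩ <;>
                        subst h <;> simp [h1.symm, h2.symm]
                  rcases hud with h | h
                  · exact hcon.1 S (h ▸ hsu)
                  · exact hcon.2 S (h ▸ hsu)
              -- fuel bounds
              have e1 : (RTree.node [t0, t1]).nodeCount
                  = 1 + (t0.nodeCount + (t1.nodeCount + 0)) := rfl
              have e2 : (RTree.node [u0, u1]).nodeCount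
                  = 1 + (u0.nodeCount + (u1.nodeCount + 0)) := rfl
              have hc12 : c1.nodeCount + c2.nodeCount = t0.nodeCount + t1.nodeCount := by
                rcases hcT with ⟨h1, h2⟩ | ⟨h1, h2⟩ <;> subst h1 <;> subst h2 <;> omega
              have hd12 : d1.nodeCount + d2.nodeCount = u0.nodeCount + u1.nodeCount := by
                rcases hcU with ⟨h1, h2⟩ | ⟨h1, h2⟩ <;> subst h1 <;> subst h2 <;> omega
              have hp1 := nodeCount_pos c1; have hp2 := nodeCount_pos c2
              have hp3 := nodeCount_pos d1; have hp4 := nodeCount_pos d2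
              have hb1 : c1.nodeCount + d1.nodeCount ≤ g' + 1 := by omega
              have hb2 : c2.nodeCount + d2.nodeCount ≤ g' + 1 := by omega
              rcases hdef with hd | hd
              · rw [IH1.2 hb1 hd, gt_then]
              · cases hK1 : nodeCmpF (g' + 1) c1 d1 with
                | lt => exact absurd hK1 IH1.1
                | gt => rw [gt_then]
                | eq => rw [eq_then, IH2.2 hb2 hd, gt_then]

/-- The (unique) maximum tree with `n` leaves. -/
def maxTree : ℕ → RTree
  | 0 => .node []
  | 1 => .node []
  | n + 2 => .node [maxTree ((n + 2) / 2), maxTree ((n + 3) / 2)]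
  termination_by n => n
  decreasing_by all_goals omega

lemma maxTree_lc (n : ℕ) (h : 1 ≤ n) : (maxTree n).leafCount = n := by
  induction n using Nat.strong_induction_on with
  | _ n IH =>
    match n, h with
    | 1, _ => rw [maxTree]; rfl
    | (m + 2), _ =>
      have h1 := IH ((m + 2) / 2) (by omega) (by omega)
      have h2 := IH ((m + 3) / 2) (by omega) (by omega)
      rw [maxTree]
      simp only [RTree.leafCount, RTree.leafCountList]
      omega

lemma maxTree_wf (n : ℕ) : (maxTree n).WF := by
  induction n using Nat.strong_induction_on with
  | _ n IH =>
    match n with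
    | 0 => rw [maxTree]; exact ⟨by simp, trivial⟩
    | 1 => rw [maxTree]; exact ⟨by simp, trivial⟩
    | (m + 2) =>
      rw [maxTree]
      exact ⟨by simp, IH ((m + 2) / 2) (by omega), IH ((m + 3) / 2) (by omega), trivial⟩

lemma maxTree_allEx (n : ℕ) (h : 1 ≤ n) : AllEx (maxTree n) := by
  induction n using Nat.strong_induction_on with
  | _ n IH =>
    match n, h with
    | 1, _ => rw [maxTree]; exact allEx_leaf
    | (m + 2), _ =>
      rw [maxTree]
      have ha : (maxTree ((m + 2) / 2)).leafCount = (m + 2) / 2 :=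
        maxTree_lc _ (by omega)
      have hb : (maxTree ((m + 3) / 2)).leafCount = (m + 3) / 2 :=
        maxTree_lc _ (by omega)
      intro S hs
      rcases subtree_node hs with hS | ⟨u, hu, hsu⟩
      · subst hS
        right
        have hL : (RTree.node [maxTree ((m + 2) / 2), maxTree ((m + 3) / 2)]).leafCount
            = m + 2 := by
          simp only [RTree.leafCount, RTree.leafCountList]
          omega
        have hip : inducedPartition [maxTree ((m + 2) / 2), maxTree ((m + 3) / 2)]
            = [(m + 2) / 2, (m + 3) / 2] := by
          simp only [inducedPartition, List.map]
          rw [mergeSort_pair, if_pos]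
          · rw [ha, hb]
          · rw [ha, hb]
            simp only [decide_eq_true_eq]
            omega
        rw [hL, hip]
      · rcases List.mem_pair.mp hu with h | h
        · exact IH ((m + 2) / 2) (by omega) (by omega) S (h ▸ hsu)
        · exact IH ((m + 3) / 2) (by omega) (by omega) S (h ▸ hsu)

end Aux

/-- Lemma 2: an ordered tree T ∈ 𝕋ₙ is the maximum element of
𝕋ₙ iff it contains no pivot node, i.e., every node of T is exhausted. -/
theorem maximum_iff_no_pivot (n : ℕ) (T : RTree) (hwf : T.WF)
    (hord : T.Ordered) (hn : T.leafCount = n) :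
    (∀ S : RTree, S.Subtree T → S.Exhausted) ↔
      (∀ T' : RTree, T'.WF → T'.leafCount = n → nodeCmp T T' ≠ .lt) := by
  subst hn
  constructor
  · intro hEx T' hwf' hlc'
    exact (main_lemma (T.nodeCount + T'.nodeCount) T T' hwf hEx hwf' hlc').1
  · intro hmax S hsub
    by_contra hnEx
    have h1 : 1 ≤ T.leafCount := leafCount_pos T
    have hMlc : (maxTree T.leafCount).leafCount = T.leafCount := maxTree_lc _ h1
    have hMwf := maxTree_wf T.leafCount
    have hMex := maxTree_allEx T.leafCount h1
    have hgt : nodeCmpF (T.nodeCount + (maxTree T.leafCount).nodeCount)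
        (maxTree T.leafCount) T = .gt :=
      (main_lemma _ (maxTree T.leafCount) T hMwf hMex hwf hMlc.symm).2
        (by omega) (fun hall => hnEx (hall S hsub))
    have hlt : nodeCmp T (maxTree T.leafCount) = .lt := by
      show nodeCmpF (T.nodeCount + (maxTree T.leafCount).nodeCount)
        T (maxTree T.leafCount) = .lt
      rw [nodeCmpF_swap, hgt]
      rfl
    exact hmax (maxTree T.leafCount) hMwf hMlc hlt
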